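/- arXiv:1612.01520 — 3 statements merged into one kernel-verified Lean document; each statement's English description precedes it below -/
import Mathlib

section
/- With the quantities of the previous block-system result, at the saddle point the value of the quadratic criterion satisfies (k/2) λ̃'Ωλ̃ + ((n−k)/2) η̃'Ωη̃ = (k/2)(ĝ¹)'Ω^{-1}ĝ¹ + ((n−k)/2)(ĝ²)'Ω^{-1}ĝ² − (n/2) ĝ' H Σ^{-1} H' ĝ, where λ̃ = −(Ω^{-1}ĝ¹ − HΣ^{-1}H'ĝ), η̃ = −(Ω^{-1}ĝ² − HΣ^{-1}H'ĝ), Σ = (G'Ω^{-1}G)^{-1}, H = Ω^{-1}GΣ, and ĝ = (kĝ¹ + (n−k)ĝ²)/n. -/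
/-!
With `P = Ω⁻¹G(G'Ω⁻¹G)⁻¹G'Ω⁻¹`, one has `HΣ⁻¹H' = P` and `PΩP = P`, so for `g = ĝ¹, ĝ²`
the vector `v = Ω⁻¹g − Pĝ` has `v'Ωv = g'Ω⁻¹g − 2 g'Pĝ + ĝ'Pĝ`. Summing with weights `k` and
`n − k`, the cross terms add up to `−2n ĝ'Pĝ` because `ĝ` is the corresponding weighted mean.
-/

open Matrix

namespace Matrix

variable {n m ι α : Type*} [Fintype n] [CommRing α]

theorem IsSymm.mul_mul_transpose {A : Matrix n n α} (hA : A.IsSymm) (B : Matrix m n α) :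
    (B * A * Bᵀ).IsSymm := by
  simp [IsSymm, transpose_mul, hA.eq, Matrix.mul_assoc]

theorem IsSymm.mulVec_dotProduct {M : Matrix n n α} (hM : M.IsSymm) (x y : n → α) :
    M *ᵥ x ⬝ᵥ y = x ⬝ᵥ M *ᵥ y := by
  rw [dotProduct_comm, dotProduct_mulVec, ← mulVec_transpose, hM.eq, dotProduct_comm]

variable [DecidableEq n]

-- Also true for singular `A`, where `A⁻¹ = 0`.
theorem nonsing_inv_mul_mul_nonsing_inv (A : Matrix n n α) : A⁻¹ * A * A⁻¹ = A⁻¹ := by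
  rcases A.nonsing_inv_cancel_or_zero with ⟨h, -⟩ | h <;> simp [h]

theorem IsSymm.transpose_mul_nonsing_inv_mul {Ω : Matrix n n α} (hΩ : Ω.IsSymm)
    (G : Matrix n ι α) : (Gᵀ * Ω⁻¹ * G).IsSymm := by
  simpa using hΩ.inv.mul_mul_transpose Gᵀ

end Matrix

variable {n ι α : Type*} [Fintype n] [DecidableEq n] [Fintype ι] [DecidableEq ι] [CommRing α]

noncomputable def glsProjection (Ω : Matrix n n α) (G : Matrix n ι α) : Matrix n n α :=
  Ω⁻¹ * G * (Gᵀ * Ω⁻¹ * G)⁻¹ * Gᵀ * Ω⁻¹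

theorem glsProjection_isSymm {Ω : Matrix n n α} (hΩ : Ω.IsSymm) (G : Matrix n ι α) :
    (glsProjection Ω G).IsSymm := by
  have h := (hΩ.transpose_mul_nonsing_inv_mul G).inv.mul_mul_transpose (Ω⁻¹ * G)
  rwa [transpose_mul, hΩ.inv.eq, ← Matrix.mul_assoc] at h

theorem nonsing_inv_mul_mul_glsProjection (Ω : Matrix n n α) (G : Matrix n ι α) :
    Ω⁻¹ * Ω * glsProjection Ω G = glsProjection Ω G := by
  simp only [glsProjection, ← Matrix.mul_assoc, nonsing_inv_mul_mul_nonsing_inv]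

theorem glsProjection_mul_mul_self (Ω : Matrix n n α) (G : Matrix n ι α) :
    glsProjection Ω G * Ω * glsProjection Ω G = glsProjection Ω G := by
  calc glsProjection Ω G * Ω * glsProjection Ω G
      = Ω⁻¹ * G * ((Gᵀ * Ω⁻¹ * G)⁻¹ * (Gᵀ * (Ω⁻¹ * Ω * Ω⁻¹) * G) * (Gᵀ * Ω⁻¹ * G)⁻¹)
          * Gᵀ * Ω⁻¹ := by simp only [glsProjection, Matrix.mul_assoc]
    _ = glsProjection Ω G := by
      rw [nonsing_inv_mul_mul_nonsing_inv, nonsing_inv_mul_mul_nonsing_inv, glsProjection]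

theorem mul_nonsing_inv_mul_transpose_eq_glsProjection {Ω : Matrix n n α} (hΩ : Ω.IsSymm)
    {G : Matrix n ι α} {S : Matrix ι ι α} (hS : S = (Gᵀ * Ω⁻¹ * G)⁻¹) {H : Matrix n ι α}
    (hH : H = Ω⁻¹ * G * S) :
    H * S⁻¹ * Hᵀ = glsProjection Ω G := by
  have hSS : S * S⁻¹ * S = S := by
    simpa only [hS, inv_inv_inv] using (Gᵀ * Ω⁻¹ * G)⁻¹⁻¹.nonsing_inv_mul_mul_nonsing_inv
  have hSsymm : Sᵀ = S := by rw [hS, (hΩ.transpose_mul_nonsing_inv_mul G).inv.eq]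
  calc H * S⁻¹ * Hᵀ = Ω⁻¹ * G * (S * S⁻¹ * S) * Gᵀ * Ω⁻¹ := by
        simp only [hH, transpose_mul, hSsymm, hΩ.inv.eq, Matrix.mul_assoc]
    _ = glsProjection Ω G := by rw [hSS, hS, glsProjection]

theorem dotProduct_mulVec_sub_glsProjection {Ω : Matrix n n α} (hΩ : Ω.IsSymm)
    (G : Matrix n ι α) (g h : n → α) :
    (Ω⁻¹ *ᵥ g - glsProjection Ω G *ᵥ h) ⬝ᵥ Ω *ᵥ (Ω⁻¹ *ᵥ g - glsProjection Ω G *ᵥ h) =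
      g ⬝ᵥ Ω⁻¹ *ᵥ g - 2 * (g ⬝ᵥ glsProjection Ω G *ᵥ h) + h ⬝ᵥ glsProjection Ω G *ᵥ h := by
  set P := glsProjection Ω G
  have hgg : Ω⁻¹ *ᵥ g ⬝ᵥ Ω *ᵥ (Ω⁻¹ *ᵥ g) = g ⬝ᵥ Ω⁻¹ *ᵥ g := by
    rw [hΩ.inv.mulVec_dotProduct, mulVec_mulVec, mulVec_mulVec, nonsing_inv_mul_mul_nonsing_inv]
  have hgh : Ω⁻¹ *ᵥ g ⬝ᵥ Ω *ᵥ (P *ᵥ h) = g ⬝ᵥ P *ᵥ h := by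
    rw [hΩ.inv.mulVec_dotProduct, mulVec_mulVec, mulVec_mulVec, nonsing_inv_mul_mul_glsProjection]
  have hhg : P *ᵥ h ⬝ᵥ Ω *ᵥ (Ω⁻¹ *ᵥ g) = g ⬝ᵥ P *ᵥ h := by
    rw [dotProduct_comm, hΩ.mulVec_dotProduct, hgh]
  have hhh : P *ᵥ h ⬝ᵥ Ω *ᵥ (P *ᵥ h) = h ⬝ᵥ P *ᵥ h := by
    rw [(glsProjection_isSymm hΩ G).mulVec_dotProduct, mulVec_mulVec, mulVec_mulVec,
      glsProjection_mul_mul_self]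
  rw [mulVec_sub, sub_dotProduct, dotProduct_sub, dotProduct_sub, hgg, hgh, hhg, hhh]
  ring

theorem stmt_8_general (m p k n : ℕ) (hkn : k < n)
    (Om : Matrix (Fin m) (Fin m) ℝ) (hOmSym : Om.IsSymm)
    (G : Matrix (Fin m) (Fin p) ℝ)
    (g1 g2 : Fin m → ℝ)
    (Sig : Matrix (Fin p) (Fin p) ℝ) (hSig : Sig = (Gᵀ * Om⁻¹ * G)⁻¹)
    (H : Matrix (Fin m) (Fin p) ℝ) (hH : H = Om⁻¹ * G * Sig)
    (ghat : Fin m → ℝ)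
    (hghat : ghat = ((k : ℝ) / (n : ℝ)) • g1 + (((n : ℝ) - (k : ℝ)) / (n : ℝ)) • g2)
    (lam eta : Fin m → ℝ)
    (hlam : lam = -(Om⁻¹.mulVec g1 - (H * Sig⁻¹ * Hᵀ).mulVec ghat))
    (heta : eta = -(Om⁻¹.mulVec g2 - (H * Sig⁻¹ * Hᵀ).mulVec ghat)) :
    ((k : ℝ) / 2) * (lam ⬝ᵥ Om.mulVec lam) +
      (((n : ℝ) - (k : ℝ)) / 2) * (eta ⬝ᵥ Om.mulVec eta) =
    ((k : ℝ) / 2) * (g1 ⬝ᵥ Om⁻¹.mulVec g1) +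
      (((n : ℝ) - (k : ℝ)) / 2) * (g2 ⬝ᵥ Om⁻¹.mulVec g2) -
      ((n : ℝ) / 2) * (ghat ⬝ᵥ (H * Sig⁻¹ * Hᵀ).mulVec ghat) := by
  rw [mul_nonsing_inv_mul_transpose_eq_glsProjection hOmSym hSig hH] at hlam heta ⊢
  set P := glsProjection Om G
  have hghat_P : ghat ⬝ᵥ P *ᵥ ghat =
      (k / n : ℝ) * (g1 ⬝ᵥ P *ᵥ ghat) + ((n - k) / n : ℝ) * (g2 ⬝ᵥ P *ᵥ ghat) := by
    nth_rw 1 [hghat]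
    simp only [add_dotProduct, smul_dotProduct, smul_eq_mul]
  have hn : (n : ℝ) ≠ 0 := Nat.cast_ne_zero.mpr (by omega)
  subst lam eta
  rw [mulVec_neg, mulVec_neg, neg_dotProduct_neg, neg_dotProduct_neg,
    dotProduct_mulVec_sub_glsProjection hOmSym, dotProduct_mulVec_sub_glsProjection hOmSym,
    hghat_P]
  field_simp
  ring

/-- Saddle-point value identity (used in eq. A12): with
`λ̃ = −(Ω⁻¹ĝ¹ − HΣ⁻¹H'ĝ)` and `η̃ = −(Ω⁻¹ĝ² − HΣ⁻¹H'ĝ)`,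
`(k/2) λ̃'Ωλ̃ + ((n−k)/2) η̃'Ωη̃
  = (k/2)(ĝ¹)'Ω⁻¹ĝ¹ + ((n−k)/2)(ĝ²)'Ω⁻¹ĝ² − (n/2) ĝ'HΣ⁻¹H'ĝ`. -/
theorem stmt_8 (m p k n : ℕ) (hk : 0 < k) (hkn : k < n)
    (Om : Matrix (Fin m) (Fin m) ℝ) (hOm : Om.PosDef) (hOmSym : Om.IsSymm)
    (G : Matrix (Fin m) (Fin p) ℝ) (hG : G.rank = p)
    (g1 g2 : Fin m → ℝ)
    (Sig : Matrix (Fin p) (Fin p) ℝ) (hSig : Sig = (Gᵀ * Om⁻¹ * G)⁻¹)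
    (H : Matrix (Fin m) (Fin p) ℝ) (hH : H = Om⁻¹ * G * Sig)
    (ghat : Fin m → ℝ)
    (hghat : ghat = ((k : ℝ) / (n : ℝ)) • g1 + (((n : ℝ) - (k : ℝ)) / (n : ℝ)) • g2)
    (lam eta : Fin m → ℝ)
    (hlam : lam = -(Om⁻¹.mulVec g1 - (H * Sig⁻¹ * Hᵀ).mulVec ghat))
    (heta : eta = -(Om⁻¹.mulVec g2 - (H * Sig⁻¹ * Hᵀ).mulVec ghat)) :
    ((k : ℝ) / 2) * (lam ⬝ᵥ Om.mulVec lam) +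
      (((n : ℝ) - (k : ℝ)) / 2) * (eta ⬝ᵥ Om.mulVec eta) =
    ((k : ℝ) / 2) * (g1 ⬝ᵥ Om⁻¹.mulVec g1) +
      (((n : ℝ) - (k : ℝ)) / 2) * (g2 ⬝ᵥ Om⁻¹.mulVec g2) -
      ((n : ℝ) / 2) * (ghat ⬝ᵥ (H * Sig⁻¹ * Hᵀ).mulVec ghat) :=
  stmt_8_general m p k n hkn Om hOmSym G g1 g2 Sig hSig H hH ghat hghat lam eta hlam heta
end

section
/- Let Ω be symmetric positive definite m×m, G of size m×p with full column rank, Σ = (G'Ω^{-1}G)^{-1}, H = Ω^{-1}GΣ, and Q = I − Ω^{-1/2}GΣG'Ω^{-1/2}. Then for any ĝ¹, ĝ² ∈ ℝ^m, 0 < k < n, with ĝ = (kĝ¹ + (n−k)ĝ²)/n, W¹ = (k/√n) Ω^{-1/2}ĝ¹, W = √n Ω^{-1/2}ĝ, and r = k/n: (k/2)(ĝ¹)'Ω^{-1}ĝ¹ + ((n−k)/2)(ĝ²)'Ω^{-1}ĝ² − (n/2)ĝ'HΣ^{-1}H'ĝ = ‖W¹ − rW‖²/(2r(1−r)) + (1/2)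 W'QW. -/
/-!
Put `A = Ω⁻¹ = S²`. Since `Σ = (G'AG)⁻¹` is symmetric and `ΣΣ⁻¹Σ = Σ`, we get
`HΣ⁻¹H' = AGΣG'A`, hence `W'QW = n (ĝ'Aĝ − ĝ'HΣ⁻¹H'ĝ)`. Moreover
`W¹ − rW = r(1−r)√n S(ĝ¹ − ĝ²)`, so after dividing by `n/2` the identity becomes the variance
decomposition `r q(x) + (1−r) q(y) = r(1−r) q(x−y) + q(rx + (1−r)y)` of the quadratic form
`q(x) = x'Ax`.
-/

open Matrix

namespace Matrix

variable {ι κ R : Type*}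

theorem mulVec_dotProduct_mulVec [Fintype ι] [Fintype κ] [CommSemiring R]
    (S T : Matrix ι κ R) (u v : κ → R) : S *ᵥ u ⬝ᵥ T *ᵥ v = u ⬝ᵥ (Sᵀ * T) *ᵥ v := by
  rw [dotProduct_mulVec, ← vecMul_transpose, vecMul_vecMul, ← dotProduct_mulVec]

theorem IsSymm.mulVec_dotProduct_mulVec_mulVec [Fintype ι] [CommSemiring R] {S : Matrix ι ι R}
    (hS : S.IsSymm) (M : Matrix ι ι R) (u : ι → R) :
    S *ᵥ u ⬝ᵥ M *ᵥ S *ᵥ u = u ⬝ᵥ (S * M * S) *ᵥ u := by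
  rw [mulVec_mulVec, mulVec_dotProduct_mulVec, hS.eq, Matrix.mul_assoc]

theorem IsSymm.dotProduct_mulVec_comm [Fintype ι] [CommSemiring R] {A : Matrix ι ι R}
    (hA : A.IsSymm) (u v : ι → R) : u ⬝ᵥ A *ᵥ v = v ⬝ᵥ A *ᵥ u := by
  rw [dotProduct_mulVec, ← mulVec_transpose, hA.eq, dotProduct_comm]

theorem IsSymm.dotProduct_mulVec_convex_combination [Fintype ι] [CommRing R] {A : Matrix ι ι R}
    (hA : A.IsSymm) (r : R) (x y : ι → R) :
    r * (x ⬝ᵥ A *ᵥ x) + (1 - r) * (y ⬝ᵥ A *ᵥ y) =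
      r * (1 - r) * ((x - y) ⬝ᵥ A *ᵥ (x - y)) +
        (r • x + (1 - r) • y) ⬝ᵥ A *ᵥ (r • x + (1 - r) • y) := by
  simp only [mulVec_add, mulVec_sub, mulVec_smul, dotProduct_add, dotProduct_sub, add_dotProduct,
    sub_dotProduct, smul_dotProduct, dotProduct_smul, smul_eq_mul, hA.dotProduct_mulVec_comm y x]
  ring

theorem IsSymm.transpose_mul_mul [Fintype ι] [CommSemiring R] {A : Matrix ι ι R} (hA : A.IsSymm)
    (B : Matrix ι κ R) : (Bᵀ * A * B).IsSymm := by
  rw [IsSymm, transpose_mul, transpose_mul, transpose_transpose, hA.eq, Matrix.mul_assoc]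

-- For singular `N`, `N⁻¹ = 0` makes both sides vanish.
theorem nonsing_inv_mul_nonsing_inv_inv_mul_nonsing_inv [Fintype ι] [DecidableEq ι] [CommRing R]
    (N : Matrix ι ι R) : N⁻¹ * N⁻¹⁻¹ * N⁻¹ = N⁻¹ := by
  by_cases hN : IsUnit N.det
  · rw [nonsing_inv_nonsing_inv N hN, nonsing_inv_mul N hN, Matrix.one_mul]
  · simp [nonsing_inv_apply_not_isUnit N hN]

theorem IsSymm.mul_nonsing_inv_mul_inv_inv_mul_transpose [Fintype κ] [DecidableEq κ] [CommRing R]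
    {N : Matrix κ κ R} (hN : N.IsSymm) (B : Matrix ι κ R) :
    B * N⁻¹ * N⁻¹⁻¹ * (B * N⁻¹)ᵀ = B * N⁻¹ * Bᵀ := by
  rw [transpose_mul, hN.inv.eq]
  calc _ = B * (N⁻¹ * N⁻¹⁻¹ * N⁻¹) * Bᵀ := by simp only [Matrix.mul_assoc]
    _ = _ := by rw [nonsing_inv_mul_nonsing_inv_inv_mul_nonsing_inv]

end Matrix

theorem stmt_9_general (m p k n : ℕ) (hk : 0 < k) (hkn : k < n)
    (Om : Matrix (Fin m) (Fin m) ℝ) (hOmSym : Om.IsSymm)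
    (G : Matrix (Fin m) (Fin p) ℝ)
    (S : Matrix (Fin m) (Fin m) ℝ) (hSsym : S.IsSymm)
    (hSS : S * S = Om⁻¹)
    (Sig : Matrix (Fin p) (Fin p) ℝ) (hSig : Sig = (Gᵀ * Om⁻¹ * G)⁻¹)
    (H : Matrix (Fin m) (Fin p) ℝ) (hH : H = Om⁻¹ * G * Sig)
    (Q : Matrix (Fin m) (Fin m) ℝ) (hQ : Q = 1 - S * G * Sig * Gᵀ * S)
    (g1 g2 : Fin m → ℝ)
    (ghat : Fin m → ℝ)
    (hghat : ghat = ((k : ℝ) / (n : ℝ)) • g1 + (((n : ℝ) - (k : ℝ)) / (n : ℝ)) • g2)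
    (W1 W : Fin m → ℝ) (r : ℝ)
    (hW1 : W1 = ((k : ℝ) / Real.sqrt n) • S.mulVec g1)
    (hW : W = Real.sqrt n • S.mulVec ghat)
    (hr : r = (k : ℝ) / (n : ℝ)) :
    ((k : ℝ) / 2) * (g1 ⬝ᵥ Om⁻¹.mulVec g1) +
      (((n : ℝ) - (k : ℝ)) / 2) * (g2 ⬝ᵥ Om⁻¹.mulVec g2) -
      ((n : ℝ) / 2) * (ghat ⬝ᵥ (H * Sig⁻¹ * Hᵀ).mulVec ghat) =
    ((W1 - r • W) ⬝ᵥ (W1 - r • W)) / (2 * r * (1 - r)) +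
      (1 / 2) * (W ⬝ᵥ Q.mulVec W) := by
  have hn : (0 : ℝ) < n := by exact_mod_cast hk.trans hkn
  have hr0 : r ≠ 0 := by rw [hr]; exact div_ne_zero (by exact_mod_cast hk.ne') hn.ne'
  have hr1 : 1 - r ≠ 0 := by
    rw [hr, sub_ne_zero, ne_comm, Ne, div_eq_one_iff_eq hn.ne']; exact_mod_cast hkn.ne
  have hkr : (k : ℝ) = r * n := by rw [hr, div_mul_cancel₀ _ hn.ne']
  have hsqrt : √(n : ℝ) * √(n : ℝ) = n := Real.mul_self_sqrt hn.le
  have hA : (Om⁻¹).IsSymm := hOmSym.inv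
  have hghat' : ghat = r • g1 + (1 - r) • g2 := by rw [hghat, hr, one_sub_div hn.ne']
  have hSQS : S * Q * S = Om⁻¹ - H * Sig⁻¹ * Hᵀ := by
    rw [hQ, hH, hSig, (hA.transpose_mul_mul G).mul_nonsing_inv_mul_inv_inv_mul_transpose,
      transpose_mul, hA.eq, ← hSS]
    simp only [Matrix.mul_sub, Matrix.sub_mul, Matrix.mul_one, Matrix.mul_assoc]
  have hBridge : W1 - r • W = (r * (1 - r) * √(n : ℝ)) • S *ᵥ (g1 - g2) := by
    have hcoef : (k : ℝ) / √(n : ℝ) = r * √(n : ℝ) := by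
      rw [div_eq_iff (by positivity), mul_assoc, hsqrt, hkr]
    rw [hW1, hW, hghat', hcoef]
    simp only [mulVec_add, mulVec_sub, mulVec_smul]
    module
  have hBridgeSq : (W1 - r • W) ⬝ᵥ (W1 - r • W) =
      (r * (1 - r)) ^ 2 * n * ((g1 - g2) ⬝ᵥ Om⁻¹ *ᵥ (g1 - g2)) := by
    rw [hBridge, smul_dotProduct, dotProduct_smul, mulVec_dotProduct_mulVec, hSsym.eq, hSS,
      smul_eq_mul, smul_eq_mul, ← mul_assoc, ← sq, mul_pow, Real.sq_sqrt hn.le]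
  have hProj : W ⬝ᵥ Q *ᵥ W = n * (ghat ⬝ᵥ (Om⁻¹ - H * Sig⁻¹ * Hᵀ) *ᵥ ghat) := by
    rw [hW, mulVec_smul, smul_dotProduct, dotProduct_smul, hSsym.mulVec_dotProduct_mulVec_mulVec,
      hSQS, smul_eq_mul, smul_eq_mul, ← mul_assoc, hsqrt]
  have hVar := hA.dotProduct_mulVec_convex_combination r g1 g2
  rw [← hghat'] at hVar
  rw [hBridgeSq, hProj, hkr, sub_mulVec, dotProduct_sub]
  field_simp
  linear_combination hVar

/-- Brownian-bridge decomposition of the saddle-point value: with `S = Ω^{-1/2}`,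
`W¹ = (k/√n) S ĝ¹`, `W = √n S ĝ`, `r = k/n` and
`Q = I − S G Σ G' S`,
`(k/2)(ĝ¹)'Ω⁻¹ĝ¹ + ((n−k)/2)(ĝ²)'Ω⁻¹ĝ² − (n/2)ĝ'HΣ⁻¹H'ĝ
  = ‖W¹ − rW‖²/(2r(1−r)) + (1/2) W'QW`. -/
theorem stmt_9 (m p k n : ℕ) (hk : 0 < k) (hkn : k < n)
    (Om : Matrix (Fin m) (Fin m) ℝ) (hOm : Om.PosDef) (hOmSym : Om.IsSymm)
    (G : Matrix (Fin m) (Fin p) ℝ) (hG : G.rank = p)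
    (S : Matrix (Fin m) (Fin m) ℝ) (hS : S.PosDef) (hSsym : S.IsSymm)
    (hSS : S * S = Om⁻¹)
    (Sig : Matrix (Fin p) (Fin p) ℝ) (hSig : Sig = (Gᵀ * Om⁻¹ * G)⁻¹)
    (H : Matrix (Fin m) (Fin p) ℝ) (hH : H = Om⁻¹ * G * Sig)
    (Q : Matrix (Fin m) (Fin m) ℝ) (hQ : Q = 1 - S * G * Sig * Gᵀ * S)
    (g1 g2 : Fin m → ℝ)
    (ghat : Fin m → ℝ)
    (hghat : ghat = ((k : ℝ) / (n : ℝ)) • g1 + (((n : ℝ) - (k : ℝ)) / (n : ℝ)) • g2)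
    (W1 W : Fin m → ℝ) (r : ℝ)
    (hW1 : W1 = ((k : ℝ) / Real.sqrt n) • S.mulVec g1)
    (hW : W = Real.sqrt n • S.mulVec ghat)
    (hr : r = (k : ℝ) / (n : ℝ)) :
    ((k : ℝ) / 2) * (g1 ⬝ᵥ Om⁻¹.mulVec g1) +
      (((n : ℝ) - (k : ℝ)) / 2) * (g2 ⬝ᵥ Om⁻¹.mulVec g2) -
      ((n : ℝ) / 2) * (ghat ⬝ᵥ (H * Sig⁻¹ * Hᵀ).mulVec ghat) =
    ((W1 - r • W) ⬝ᵥ (W1 - r • W)) / (2 * r * (1 - r)) +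
      (1 / 2) * (W ⬝ᵥ Q.mulVec W) :=
  stmt_9_general m p k n hk hkn Om hOmSym G S hSsym hSS Sig hSig H hH Q hQ g1 g2 ghat hghat W1 W r
    hW1 hW hr
end

section
/- Let c_n, d_n, e_n be sequences of nonnegative random variables with d_n = o_p(n^{-1/2}), e_n = O_p(n^{-1/2}), and suppose c_n ≤ (1 + √n c_n) d_n + e_n for all n. Then c_n = O_p(n^{-1/2}). -/
open MeasureTheory Filter
open scoped Topology

/-- Self-improving rate argument concluding the proof of Theorem 3.1: if
`c_n ≤ (1 + √n c_n) d_n + e_n` with `d_n = o_p(n^{-1/2})` and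
`e_n = O_p(n^{-1/2})`, then `c_n = O_p(n^{-1/2})`. -/
theorem stmt_17 {Ω : Type*} [MeasurableSpace Ω] (μ : Measure Ω) [IsProbabilityMeasure μ]
    (c d e : ℕ → Ω → ℝ)
    (hc : ∀ n ω, 0 ≤ c n ω) (hd : ∀ n ω, 0 ≤ d n ω) (he : ∀ n ω, 0 ≤ e n ω)
    (hineq : ∀ n ω, c n ω ≤ (1 + Real.sqrt n * c n ω) * d n ω + e n ω)
    -- d_n = o_p(n^{-1/2})
    (hdo : ∀ ε > (0 : ℝ),
      Tendsto (fun n : ℕ => μ {ω | ε ≤ Real.sqrt n * d n ω}) atTop (𝓝 0))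
    -- e_n = O_p(n^{-1/2})
    (heO : ∀ ε > (0 : ℝ), ∃ M : ℝ, ∀ᶠ n : ℕ in atTop,
      μ {ω | M < Real.sqrt n * e n ω} ≤ ENNReal.ofReal ε) :
    -- c_n = O_p(n^{-1/2})
    ∀ ε > (0 : ℝ), ∃ M : ℝ, ∀ᶠ n : ℕ in atTop,
      μ {ω | M < Real.sqrt n * c n ω} ≤ ENNReal.ofReal ε := by
  intro ε hε
  obtain ⟨M, hM⟩ := heO (ε / 2) (by linarith)
  have hd2 : ∀ᶠ n : ℕ in atTop,
      μ {ω | (1/2 : ℝ) ≤ Real.sqrt n * d n ω} < ENNReal.ofReal (ε / 2) := by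
    have := hdo (1/2) (by norm_num)
    exact this.eventually_lt_const (by positivity)
  refine ⟨1 + 2 * M, ?_⟩
  filter_upwards [hM, hd2] with n hMn hdn
  have hsub : {ω | 1 + 2 * M < Real.sqrt n * c n ω} ⊆
      {ω | (1/2 : ℝ) ≤ Real.sqrt n * d n ω} ∪ {ω | M < Real.sqrt n * e n ω} := by
    intro ω hω
    simp only [Set.mem_setOf_eq] at hω
    by_contra hcon
    simp only [Set.mem_union, Set.mem_setOf_eq, not_or, not_le, not_lt] at hcon
    obtain ⟨h1, h2⟩ := hcon
    have hs : (0 : ℝ) ≤ Real.sqrt n := Real.sqrt_nonneg _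
    have hcnn : (0 : ℝ) ≤ Real.sqrt n * c n ω := mul_nonneg hs (hc n ω)
    have h3 : Real.sqrt n * c n ω ≤
        Real.sqrt n * d n ω + (Real.sqrt n * c n ω) * (Real.sqrt n * d n ω)
          + Real.sqrt n * e n ω := by
      have := hineq n ω
      nlinarith [hd n ω, he n ω, hc n ω]
    nlinarith [hd n ω]
  calc μ {ω | 1 + 2 * M < Real.sqrt n * c n ω}
      ≤ μ ({ω | (1/2 : ℝ) ≤ Real.sqrt n * d n ω} ∪ {ω | M < Real.sqrt n * e n ω}) :=
        measure_mono hsub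
    _ ≤ μ {ω | (1/2 : ℝ) ≤ Real.sqrt n * d n ω} + μ {ω | M < Real.sqrt n * e n ω} :=
        measure_union_le _ _
    _ ≤ ENNReal.ofReal (ε / 2) + ENNReal.ofReal (ε / 2) :=
        add_le_add hdn.le hMn
    _ = ENNReal.ofReal ε := by
        rw [← ENNReal.ofReal_add (by linarith) (by linarith)]; ring_nf
end
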